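/- Let β be unimodular, λ ∈ 𝔻\{0}, κ(z) = √(1−|λ|²)/(1−z·conj(λ)), φ(z) = (conj(λ)/λ)·(λ−z)/(1−z·conj(λ)), and J_{β,λ}f(z) = β·κ(z)·conj(f(conj(φ(z)))). Then for every z ∈ 𝔻: (1) J_{β,λ}K_z = β·κ(z)·K_{conj(φ(z))}, and (2) J_{β,λ}K_z^{[1]} = β·κ'(z)·K_{conj(φ(z))} + β·κ(z)·φ'(z)·K_{conj(φ(z))}^{[1]}. -/

import Mathlib

open Complex ComplexConjugate Metric Filter

noncomputable section

/-- The Hardy space `H²`, modeled as the space of square-summable Taylor coefficient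
sequences, i.e. `ℓ²(ℕ, ℂ)`, with inner product `⟨f,g⟩ = Σₙ aₙ conj(bₙ)`. -/
abbrev H2 := lp (fun _ : ℕ => ℂ) 2

/-- The holomorphic function on the unit disk associated to an element of `H²`. -/
def H2.toFun (f : H2) (z : ℂ) : ℂ := ∑' n, f n * z ^ n

/-- The open unit disk. -/
def 𝔻 : Set ℂ := Metric.ball (0 : ℂ) 1

/-- The weight `κ(z) = √(1−|λ|²)/(1−z·conj λ)`. -/
def kappa (l : ℂ) (z : ℂ) : ℂ := (Real.sqrt (1 - ‖l‖ ^ 2) : ℂ) / (1 - z * conj l)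

/-- The disk automorphism `φ(z) = (conj λ/λ)·(λ−z)/(1−z·conj λ)`. -/
def phi (l : ℂ) (z : ℂ) : ℂ := (conj l / l) * ((l - z) / (1 - z * conj l))

/-- The weighted composition conjugation `J_{β,λ}` on `H²`, described through its action
on the represented functions. -/
def IsJ (beta l : ℂ) (J : H2 → H2) : Prop :=
  ∀ f : H2, ∀ z ∈ 𝔻, H2.toFun (J f) z = beta * kappa l z * conj (H2.toFun f (conj (phi l z)))

/-!
An element of `H²` is determined by its function on the disk (uniqueness of Taylor
coefficients), so both claims are pointwise identities. With `λ̄ = conj l`, a direct computation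
gives the symmetric identity `(1 - u λ̄)(1 - z φ(u)) = (1 - z λ̄)(1 - φ(z) u)`, hence
`κ(u) / (1 - z φ(u)) = κ(z) / (1 - φ(z) u)`, which is the first claim evaluated at `u`.
Since `K_z^{[1]}(u) = u / (1 - z̄ u)²` is the derivative of `K_z(u)` with respect to `z̄`, the
second claim is the derivative of this identity with respect to `z`.
-/

lemma mem_𝔻_iff {w : ℂ} : w ∈ 𝔻 ↔ ‖w‖ < 1 := mem_ball_zero_iff

namespace H2

lemma summable_toFun (f : H2) {z : ℂ} (hz : ‖z‖ < 1) : Summable fun n => f n * z ^ n := by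
  refine .of_norm_bounded ((summable_geometric_of_lt_one (norm_nonneg z) hz).mul_left ‖f‖)
    fun n => ?_
  rw [norm_mul, norm_pow]
  gcongr
  exact lp.norm_apply_le_norm two_ne_zero f n

lemma toFun_smul (c : ℂ) (f : H2) (z : ℂ) : H2.toFun (c • f) z = c * H2.toFun f z := by
  simp only [H2.toFun, lp.coeFn_smul, Pi.smul_apply, smul_eq_mul, mul_assoc, tsum_mul_left]

lemma toFun_add (f g : H2) {z : ℂ} (hz : ‖z‖ < 1) :
    H2.toFun (f + g) z = H2.toFun f z + H2.toFun g z := by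
  simp only [H2.toFun, lp.coeFn_add, Pi.add_apply, add_mul]
  exact (summable_toFun f hz).tsum_add (summable_toFun g hz)

lemma hasFPowerSeriesOnBall_toFun (f : H2) :
    HasFPowerSeriesOnBall (H2.toFun f) (FormalMultilinearSeries.ofScalars ℂ ⇑f) 0 1 where
  r_le := by
    refine (FormalMultilinearSeries.ofScalars ℂ ⇑f).le_radius_of_bound ‖f‖ fun n => ?_
    rw [FormalMultilinearSeries.ofScalars_norm, NNReal.coe_one, one_pow, mul_one]
    exact lp.norm_apply_le_norm two_ne_zero f n
  r_pos := one_pos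
  hasSum {y} hy := by
    have hy : ‖y‖ < 1 := by
      rwa [Metric.mem_eball, edist_zero_right, ← ofReal_norm, ENNReal.ofReal_lt_one] at hy
    simpa [H2.toFun, FormalMultilinearSeries.ofScalars_apply_eq, mul_comm] using
      (summable_toFun f hy).hasSum

lemma ext_of_toFun {f g : H2} (h : ∀ z ∈ 𝔻, H2.toFun f z = H2.toFun g z) : f = g := by
  have hfg := (hasFPowerSeriesOnBall_toFun f).hasFPowerSeriesAt
    |>.eq_formalMultilinearSeries_of_eventually (hasFPowerSeriesOnBall_toFun g).hasFPowerSeriesAt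
      (eventually_of_mem (ball_mem_nhds 0 one_pos) h)
  exact lp.ext (FormalMultilinearSeries.ofScalars_series_injective ℂ ℂ hfg)

end H2

lemma one_sub_mul_ne_zero_of_norm_lt_one {a b : ℂ} (ha : ‖a‖ < 1) (hb : ‖b‖ < 1) :
    1 - a * b ≠ 0 := by
  have hab : ‖a * b‖ < 1 := by
    rw [norm_mul]
    exact mul_lt_one_of_nonneg_of_lt_one_left (norm_nonneg a) ha hb.le
  intro h
  rw [← eq_of_sub_eq_zero h, norm_one] at hab
  exact hab.false

lemma one_sub_mul_conj_ne_zero {l w : ℂ} (hl : ‖l‖ < 1) (hw : ‖w‖ < 1) :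
    1 - w * conj l ≠ 0 :=
  one_sub_mul_ne_zero_of_norm_lt_one hw (by rwa [RCLike.norm_conj])

lemma normSq_one_sub_mul_conj_sub_normSq_sub (l z : ℂ) :
    normSq (1 - z * conj l) - normSq (l - z) = (1 - normSq l) * (1 - normSq z) := by
  simp only [normSq_apply, sub_re, sub_im, mul_re, mul_im, conj_re, conj_im, one_re, one_im]
  ring

lemma norm_sub_lt_norm_one_sub_mul_conj {l z : ℂ} (hl : ‖l‖ < 1) (hz : ‖z‖ < 1) :
    ‖l - z‖ < ‖1 - z * conj l‖ := by
  have hl' : normSq l < 1 := by rw [normSq_eq_norm_sq]; nlinarith [norm_nonneg l]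
  have hz' : normSq z < 1 := by rw [normSq_eq_norm_sq]; nlinarith [norm_nonneg z]
  have key := normSq_one_sub_mul_conj_sub_normSq_sub l z
  rw [norm_def, norm_def]
  exact Real.sqrt_lt_sqrt (normSq_nonneg _) (by nlinarith)

lemma norm_phi_lt_one {l z : ℂ} (hl : ‖l‖ < 1) (hl0 : l ≠ 0) (hz : ‖z‖ < 1) :
    ‖phi l z‖ < 1 := by
  have h := norm_sub_lt_norm_one_sub_mul_conj hl hz
  rw [phi, norm_mul, norm_div, RCLike.norm_conj, div_self (norm_ne_zero_iff.2 hl0), one_mul,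
    norm_div, div_lt_one ((norm_nonneg _).trans_lt h)]
  exact h

lemma differentiableAt_kappa {l z : ℂ} (hz : 1 - z * conj l ≠ 0) :
    DifferentiableAt ℂ (kappa l) z :=
  (differentiableAt_const _).div (by fun_prop) hz

lemma differentiableAt_phi {l z : ℂ} (hz : 1 - z * conj l ≠ 0) :
    DifferentiableAt ℂ (phi l) z :=
  (differentiableAt_const _).mul ((by fun_prop : DifferentiableAt ℂ (fun w => l - w) z).div
    (by fun_prop) hz)

lemma one_sub_mul_conj_mul_one_sub_mul_phi {l u z : ℂ} (hl0 : l ≠ 0)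
    (hu : 1 - u * conj l ≠ 0) (hz : 1 - z * conj l ≠ 0) :
    (1 - u * conj l) * (1 - z * phi l u) = (1 - z * conj l) * (1 - phi l z * u) := by
  have hu' : 1 - conj l * u ≠ 0 := by rwa [mul_comm]
  have hz' : 1 - conj l * z ≠ 0 := by rwa [mul_comm]
  simp only [phi]
  field_simp
  ring

lemma kappa_div_one_sub_mul_phi {l u z : ℂ} (hl0 : l ≠ 0)
    (hu : 1 - u * conj l ≠ 0) (hz : 1 - z * conj l ≠ 0) :
    kappa l u / (1 - z * phi l u) = kappa l z / (1 - phi l z * u) := by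
  rw [kappa, kappa, div_div, div_div, one_sub_mul_conj_mul_one_sub_mul_phi hl0 hu hz]

lemma kappa_mul_phi_div_one_sub_mul_phi_sq {l u z : ℂ} (hl : ‖l‖ < 1) (hl0 : l ≠ 0)
    (hu : ‖u‖ < 1) (hz : ‖z‖ < 1) :
    kappa l u * phi l u / (1 - z * phi l u) ^ 2 =
      deriv (kappa l) z / (1 - phi l z * u) +
        kappa l z * deriv (phi l) z * u / (1 - phi l z * u) ^ 2 := by
  have hDz := one_sub_mul_conj_ne_zero hl hz
  have hzφ := one_sub_mul_ne_zero_of_norm_lt_one hz (norm_phi_lt_one hl hl0 hu)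
  have hφu := one_sub_mul_ne_zero_of_norm_lt_one (norm_phi_lt_one hl hl0 hz) hu
  have hL : HasDerivAt (fun w => kappa l u / (1 - w * phi l u))
      (kappa l u * phi l u / (1 - z * phi l u) ^ 2) z :=
    ((hasDerivAt_const z (kappa l u)).div (((hasDerivAt_id' z).mul_const (phi l u)).const_sub 1)
      hzφ).congr_deriv (by ring)
  have hR : HasDerivAt (fun w => kappa l w / (1 - phi l w * u))
      (deriv (kappa l) z / (1 - phi l z * u) +
        kappa l z * deriv (phi l) z * u / (1 - phi l z * u) ^ 2) z :=
    ((differentiableAt_kappa hDz).hasDerivAt.div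
      (((differentiableAt_phi hDz).hasDerivAt.mul_const u).const_sub 1) hφu).congr_deriv
      (by field_simp; ring)
  refine hL.unique (hR.congr_of_eventuallyEq ?_)
  filter_upwards [isOpen_ball.mem_nhds (mem_ball_zero_iff.2 hz)] with w hw
  exact kappa_div_one_sub_mul_phi hl0 (one_sub_mul_conj_ne_zero hl hu)
    (one_sub_mul_conj_ne_zero hl (mem_ball_zero_iff.1 hw))

theorem stmt13_general (beta l : ℂ) (hl : l ∈ 𝔻) (hl0 : l ≠ 0)
    (J : H2 → H2) (hJ : IsJ beta l J) :
    ∀ z ∈ 𝔻, ∀ K K1 Kp Kp1 : H2,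
      (∀ u ∈ 𝔻, H2.toFun K u = 1 / (1 - conj z * u)) →
      (∀ u ∈ 𝔻, H2.toFun K1 u = u / (1 - conj z * u) ^ 2) →
      (∀ u ∈ 𝔻, H2.toFun Kp u = 1 / (1 - conj (conj (phi l z)) * u)) →
      (∀ u ∈ 𝔻, H2.toFun Kp1 u = u / (1 - conj (conj (phi l z)) * u) ^ 2) →
      J K = (beta * kappa l z) • Kp ∧
        J K1 = (beta * deriv (kappa l) z) • Kp +
          (beta * kappa l z * deriv (phi l) z) • Kp1 := by
  intro z hz K K1 Kp Kp1 hK hK1 hKp hKp1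
  rw [mem_𝔻_iff] at hl hz
  have hφ : ∀ u ∈ 𝔻, conj (phi l u) ∈ 𝔻 := fun u hu => by
    rw [mem_𝔻_iff, RCLike.norm_conj]
    exact norm_phi_lt_one hl hl0 (mem_𝔻_iff.1 hu)
  constructor
  · refine H2.ext_of_toFun fun u hu => ?_
    rw [hJ K u hu, hK _ (hφ u hu), H2.toFun_smul, hKp u hu]
    simp only [map_div₀, map_one, map_sub, map_mul, conj_conj]
    linear_combination beta * kappa_div_one_sub_mul_phi hl0
      (one_sub_mul_conj_ne_zero hl (mem_𝔻_iff.1 hu)) (one_sub_mul_conj_ne_zero hl hz)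
  · refine H2.ext_of_toFun fun u hu => ?_
    rw [hJ K1 u hu, hK1 _ (hφ u hu), H2.toFun_add _ _ (mem_𝔻_iff.1 hu), H2.toFun_smul,
      H2.toFun_smul, hKp u hu, hKp1 u hu]
    simp only [map_div₀, map_pow, map_sub, map_one, map_mul, conj_conj]
    linear_combination beta * kappa_mul_phi_div_one_sub_mul_phi_sq hl hl0 (mem_𝔻_iff.1 hu) hz

/-- the conjugation `J_{β,λ}` acts on kernels by
`J K_z = β·κ(z)·K_{conj φ(z)}` and
`J K_z^{[1]} = β·κ′(z)·K_{conj φ(z)} + β·κ(z)·φ′(z)·K_{conj φ(z)}^{[1]}`. -/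
theorem stmt13 (beta l : ℂ) (hβ : ‖beta‖ = 1) (hl : l ∈ 𝔻) (hl0 : l ≠ 0)
    (J : H2 → H2) (hJ : IsJ beta l J) :
    ∀ z ∈ 𝔻, ∀ K K1 Kp Kp1 : H2,
      (∀ u ∈ 𝔻, H2.toFun K u = 1 / (1 - conj z * u)) →
      (∀ u ∈ 𝔻, H2.toFun K1 u = u / (1 - conj z * u) ^ 2) →
      (∀ u ∈ 𝔻, H2.toFun Kp u = 1 / (1 - conj (conj (phi l z)) * u)) →
      (∀ u ∈ 𝔻, H2.toFun Kp1 u = u / (1 - conj (conj (phi l z)) * u) ^ 2) →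
      J K = (beta * kappa l z) • Kp ∧
        J K1 = (beta * deriv (kappa l) z) • Kp +
          (beta * kappa l z * deriv (phi l) z) • Kp1 :=
  stmt13_general beta l hl hl0 J hJ
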